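/- In a DAG satisfying the global directed Markov property with a d-separation faithful distribution, two distinct vertices A and B are adjacent if and only if A and B are d-connected given every subset of Pa(A)\{B} and every subset of Pa(B)\{A}. -/

import Mathlib

variable {V : Type*}

/-- `x` and `y` are adjacent in the directed graph with edge relation `E`. -/
def GraphAdj (E : V → V → Prop) (x y : V) : Prop := E x y ∨ E y x

/-- The set of parents of `x`. -/
def Parents (E : V → V → Prop) (x : V) : Set V := {p | E p x}

/-- The edge relation `E` is acyclic (no directed cycles, including self-loops). -/
def IsAcyclicRel (E : V → V → Prop) : Prop := ∀ v, ¬ Relation.TransGen E v v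

/-- `A` and `B` are d-connected given `Z`: there is a path (a finite sequence of
distinct vertices joined by edges in either direction) from `A` to `B` such that
every collider on the path is in `Z` or has a descendant in `Z`, and no
non-collider on the path is in `Z`. -/
def DConnected (E : V → V → Prop) (Z : Set V) (A B : V) : Prop :=
  ∃ (n : ℕ) (p : ℕ → V), 0 < n ∧ p 0 = A ∧ p n = B ∧
    (∀ i j, i ≤ n → j ≤ n → p i = p j → i = j) ∧
    (∀ i < n, E (p i) (p (i + 1)) ∨ E (p (i + 1)) (p i)) ∧
    (∀ i, 0 < i → i < n →
      ((E (p (i - 1)) (p i) ∧ E (p (i + 1)) (p i)) →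
        ∃ d, Relation.ReflTransGen E (p i) d ∧ d ∈ Z) ∧
      (¬(E (p (i - 1)) (p i) ∧ E (p (i + 1)) (p i)) → p i ∉ Z))

/-- `A` and `B` are d-separated given `Z`. -/
def DSeparated (E : V → V → Prop) (Z : Set V) (A B : V) : Prop :=
  ¬ DConnected E Z A B

/-!
If `A → B` or `B → A`, the one-edge path d-connects `A` and `B` given any set. Conversely,
suppose `A` and `B` are not adjacent and take a path d-connecting them given `Pa(A) \ {B}`.
Its first edge cannot enter `A`: the neighbour would be a parent of `A` other than `B` and a
non-collider, hence blocked. So the path leaves `A`, and either it is directed, making `B` a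
descendant of `A`, or its first collider is a descendant of `A` with a descendant in `Pa(A)`,
which closes a directed cycle. By symmetry `A` is also a descendant of `B`, again a cycle.
-/

section

variable {E : V → V → Prop}

namespace DConnected

variable {Z : Set V} {A B : V}

theorem of_graphAdj (h : GraphAdj E A B) (hAB : A ≠ B) : DConnected E Z A B := by
  refine ⟨1, fun i => if i = 0 then A else B, one_pos, rfl, rfl, ?_, ?_, ?_⟩
  · intro i j hi hj hij
    interval_cases i <;> interval_cases j <;> simp_all [eq_comm]
  · intro i hi
    obtain rfl : i = 0 := by omega
    exact h
  · intro i h0 h1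
    omega

theorem symm (h : DConnected E Z A B) : DConnected E Z B A := by
  obtain ⟨n, p, hn, h0, hN, hinj, hedge, hcol⟩ := h
  refine ⟨n, fun i => p (n - i), hn, by simp [hN], by simp [h0], ?_, ?_, ?_⟩
  · intro i j hi hj hij
    have := hinj (n - i) (n - j) (Nat.sub_le _ _) (Nat.sub_le _ _) hij
    omega
  · intro i hi
    have hsucc : n - i = n - (i + 1) + 1 := by omega
    simp only [hsucc]
    exact (hedge (n - (i + 1)) (by omega)).symm
  · intro i hi0 hin
    have hprev : n - (i - 1) = n - i + 1 := by omega
    have hnext : n - (i + 1) = n - i - 1 := by omega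
    simp only [hprev, hnext, and_comm (a := E (p (n - i + 1)) _)]
    exact hcol (n - i) (by omega) (by omega)

end DConnected

theorem Relation.transGen_of_forall_lt {p : ℕ → V} {k : ℕ} (hk : 0 < k)
    (h : ∀ j < k, E (p j) (p (j + 1))) : Relation.TransGen E (p 0) (p k) := by
  induction k with
  | zero => omega
  | succ k ih =>
    rcases Nat.eq_zero_or_pos k with rfl | hk
    · exact .single (h 0 one_pos)
    · exact (ih hk fun j hj => h j (by omega)).tail (h k (by omega))

theorem transGen_or_exists_collider {p : ℕ → V} {n : ℕ} (hn : 0 < n)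
    (hedge : ∀ i < n, E (p i) (p (i + 1)) ∨ E (p (i + 1)) (p i)) (hfirst : E (p 0) (p 1)) :
    Relation.TransGen E (p 0) (p n) ∨
      ∃ i, 0 < i ∧ i < n ∧ E (p (i - 1)) (p i) ∧ E (p (i + 1)) (p i) ∧
        Relation.TransGen E (p 0) (p i) := by
  classical
  by_cases hdir : ∀ j < n, E (p j) (p (j + 1))
  · exact .inl (Relation.transGen_of_forall_lt hn hdir)
  have hex : ∃ i, i < n ∧ ¬ E (p i) (p (i + 1)) := by simpa using hdir
  obtain ⟨hi, hback⟩ := Nat.find_spec hex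
  set i := Nat.find hex
  have hprefix : ∀ j < i, E (p j) (p (j + 1)) := fun j hj => by
    simpa [hi.trans' hj] using Nat.find_min hex hj
  have hi0 : 0 < i := Nat.pos_of_ne_zero fun h => hback (h ▸ hfirst)
  refine .inr ⟨i, hi0, hi, ?_, (hedge i hi).resolve_left hback,
    Relation.transGen_of_forall_lt hi0 hprefix⟩
  simpa [Nat.sub_add_cancel hi0] using hprefix (i - 1) (by omega)

theorem transGen_of_dConnected_parents_sdiff (hacy : IsAcyclicRel E)
    {A B : V} (hnadj : ¬ GraphAdj E A B) (h : DConnected E (Parents E A \ {B}) A B) :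
    Relation.TransGen E A B := by
  obtain ⟨n, p, hn, rfl, rfl, hinj, hedge, hcol⟩ := h
  have hn1 : n ≠ 1 := by
    rintro rfl
    exact hnadj (hedge 0 one_pos)
  rcases hedge 0 hn with hout | hin
  · rcases transGen_or_exists_collider hn hedge hout with hdir | ⟨i, hi0, hlt, hl, hr, hdesc⟩
    · exact hdir
    obtain ⟨d, hid, hdZ, -⟩ := (hcol i hi0 hlt).1 ⟨hl, hr⟩
    exact (hacy (p 0) ((hdesc.trans_left hid).tail hdZ)).elim
  · -- `p 1` is a parent of `A` and, the graph being acyclic, not a collider on the path.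
    have hnoncol : ¬ (E (p (1 - 1)) (p 1) ∧ E (p (1 + 1)) (p 1)) := fun h =>
      hacy (p 0) (.tail (.single h.1) hin)
    refine ((hcol 1 one_pos (by omega)).2 hnoncol ⟨hin, fun h1n => hn1 ?_⟩).elim
    exact (hinj 1 n (by omega) le_rfl h1n).symm

end

theorem adjacent_iff_dconnected_all_parent_subsets_general
    (E : V → V → Prop) (hacy : IsAcyclicRel E) (A B : V) (hAB : A ≠ B) :
    GraphAdj E A B ↔
      ((∀ Z : Set V, Z ⊆ Parents E A \ {B} → DConnected E Z A B) ∧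
       (∀ Z : Set V, Z ⊆ Parents E B \ {A} → DConnected E Z A B)) := by
  refine ⟨fun hadj => ⟨fun _ _ => .of_graphAdj hadj hAB, fun _ _ => .of_graphAdj hadj hAB⟩, ?_⟩
  rintro ⟨hA, hB⟩
  by_contra hnadj
  have hAtoB := transGen_of_dConnected_parents_sdiff hacy hnadj (hA _ subset_rfl)
  have hBtoA := transGen_of_dConnected_parents_sdiff hacy (hnadj ∘ Or.symm) (hB _ subset_rfl).symm
  exact hacy A (hAtoB.trans hBtoA)

/-- In a DAG (with a d-separation faithful Markov distribution, so that
dependence coincides with d-connection), two distinct vertices `A` and `B` are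
adjacent iff they are d-connected given every subset of `Pa(A)\{B}` and every
subset of `Pa(B)\{A}`. -/
theorem adjacent_iff_dconnected_all_parent_subsets [Finite V]
    (E : V → V → Prop) (hacy : IsAcyclicRel E) (A B : V) (hAB : A ≠ B) :
    GraphAdj E A B ↔
      ((∀ Z : Set V, Z ⊆ Parents E A \ {B} → DConnected E Z A B) ∧
       (∀ Z : Set V, Z ⊆ Parents E B \ {A} → DConnected E Z A B)) :=
  adjacent_iff_dconnected_all_parent_subsets_general E hacy A B hAB
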